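/- arXiv:1606.03869 — 2 statements merged into one kernel-verified Lean document; each statement's English description precedes it below -/
import Mathlib

section
/- A pre-Hilbert space X has an orthonormal basis if and only if there is a family (X_α)_{α<δ} of separable, pairwise orthogonal sub-inner-product-spaces of X whose union spans a dense subspace of X. -/
noncomputable section
open scoped InnerProductSpace ENNReal

/-- An orthonormal subset of an inner product space. -/
def OrthSet (k : Type*) {E : Type*} [RCLike k] [NormedAddCommGroup E]
    [InnerProductSpace k E] (B : Set E) : Prop :=
  Orthonormal k ((↑) : B → E)

/-- A maximal orthonormal system of the whole space. -/
def MaximalOrthSet (k : Type*) {E : Type*} [RCLike k] [NormedAddCommGroup E]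
    [InnerProductSpace k E] (B : Set E) : Prop :=
  OrthSet k B ∧ ∀ C : Set E, B ⊆ C → OrthSet k C → C = B

/-- An orthonormal basis (as a set): an orthonormal system whose linear span is dense. -/
def IsOrthBasisSet (k : Type*) {E : Type*} [RCLike k] [NormedAddCommGroup E]
    [InnerProductSpace k E] (B : Set E) : Prop :=
  OrthSet k B ∧ Dense (Submodule.span k B : Set E)

/-- The space has an orthonormal basis (is non-pathological). -/
def HasOrthBasis (k E : Type*) [RCLike k] [NormedAddCommGroup E]
    [InnerProductSpace k E] : Prop :=
  ∃ B : Set E, IsOrthBasisSet k B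

/-- Density: least cardinality of a dense subset. -/
def densityCard (E : Type*) [TopologicalSpace E] : Cardinal :=
  sInf { c | ∃ D : Set E, Dense D ∧ Cardinal.mk D = c }

universe u

/-! Gram–Schmidt applied to a dense sequence gives each separable piece an orthonormal system
with dense span; as the pieces are mutually orthogonal, the union of these systems is orthonormal,
and the closure of its span contains every piece. Conversely, the lines through the vectors of an
orthonormal basis form such a family. -/

open Set Submodule TopologicalSpace InnerProductSpace

section

variable {k E : Type*} [RCLike k] [NormedAddCommGroup E] [InnerProductSpace k E]

theorem exists_orthSet_span_eq_span_range {ι : Type*} [LinearOrder ι] [LocallyFiniteOrderBot ι]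
    [WellFoundedLT ι] (u : ι → E) :
    ∃ B : Set E, OrthSet k B ∧ span k B = span k (range u) := by
  set g := gramSchmidtNormed k u
  refine ⟨range g \ {0}, ?_, ?_⟩
  · have hrange : range (fun i : {i | g i ≠ 0} => g i) = range g \ {0} := by
      ext x
      simp only [mem_range, Subtype.exists, mem_ofPred_eq, mem_sdiff, mem_singleton_iff]
      grind
    exact hrange ▸ (gramSchmidtNormed_orthonormal' u).toSubtypeRange
  · rw [span_sdiff_singleton_zero, span_gramSchmidtNormed_range, span_gramSchmidt]

theorem Submodule.exists_orthSet_le_topologicalClosure_span (X : Submodule k E)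
    [SeparableSpace X] :
    ∃ B ⊆ (X : Set E), OrthSet k B ∧ X ≤ (span k B).topologicalClosure := by
  obtain ⟨u, hu⟩ := exists_dense_seq X
  obtain ⟨B, hB, hspan⟩ := exists_orthSet_span_eq_span_range (k := k) (fun n => (u n : E))
  refine ⟨B, (subset_span (R := k)).trans ?_, hB, fun x hx => ?_⟩
  · exact hspan ▸ span_le.2 (range_subset_iff.2 fun n => (u n).2)
  · rw [← SetLike.mem_coe, topologicalClosure_coe, hspan]
    exact map_mem_closure continuous_subtype_val (hu ⟨x, hx⟩)
      (by rintro _ ⟨n, rfl⟩; exact subset_span ⟨n, rfl⟩)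

theorem OrthSet.isOrtho_span_singleton {B : Set E} (hB : OrthSet k B) :
    Pairwise fun a b : B => (k ∙ (a : E)) ⟂ (k ∙ (b : E)) :=
  fun _ _ hab => isOrtho_span.2 (by rintro _ rfl _ rfl; exact hB.2 hab)

theorem orthSet_iUnion {ι : Type*} {X : ι → Submodule k E} (hX : Pairwise fun i j => X i ⟂ X j)
    {B : ι → Set E} (hBX : ∀ i, B i ⊆ X i) (hB : ∀ i, OrthSet k (B i)) :
    OrthSet k (⋃ i, B i) := by
  classical
  rw [OrthSet, orthonormal_subtype_iff_ite]
  simp only [mem_iUnion]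
  rintro v ⟨i, hv⟩ w ⟨j, hw⟩
  obtain rfl | hij := eq_or_ne i j
  · exact orthonormal_subtype_iff_ite.1 (hB i) v hv w hw
  · have hvw : inner k v w = 0 := (hX hij).inner_eq (hBX i hv) (hBX j hw)
    refine hvw.trans (if_neg ?_).symm
    rintro rfl
    simpa [inner_self_eq_zero.1 hvw] using (hB i).1 ⟨v, hv⟩

end

/-- `X` has an orthonormal basis iff it is the closure of an orthogonal
direct sum of separable sub-inner-product-spaces. -/
theorem stmt13 {k : Type*} [RCLike k] {E : Type u} [NormedAddCommGroup E]
    [InnerProductSpace k E] :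
    HasOrthBasis k E ↔
      ∃ (δ : Type u) (X : δ → Submodule k E),
        (∀ α, TopologicalSpace.SeparableSpace (X α)) ∧
        (∀ α β, α ≠ β → ∀ u ∈ X α, ∀ v ∈ X β, (inner k u v : k) = 0) ∧
        Dense ((⨆ α, X α : Submodule k E) : Set E) := by
  constructor
  · rintro ⟨B, hB, hBd⟩
    refine ⟨B, fun b => k ∙ (b : E), fun _ => inferInstance,
      fun _ _ hab => isOrtho_iff_inner_eq.1 (hB.isOrtho_span_singleton hab), ?_⟩
    rwa [span_eq_iSup_of_singleton_spans, ← iSup_subtype''] at hBd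
  · rintro ⟨δ, X, hsep, horth, hd⟩
    choose B hBX hB hXB using fun α => (X α).exists_orthSet_le_topologicalClosure_span
    refine ⟨⋃ α, B α, orthSet_iUnion (fun α β h => isOrtho_iff_inner_eq.2 (horth α β h)) hBX hB,
      ?_⟩
    rw [dense_iff_topologicalClosure_eq_top, eq_top_iff] at hd ⊢
    refine hd.trans (topologicalClosure_minimal _ (iSup_le fun α => (hXB α).trans ?_)
      (isClosed_topologicalClosure _))
    exact topologicalClosure_mono (span_mono (subset_iUnion B α))
end
end

section
/- Suppose X is a dense linear subspace of ℓ²(S), S' ⊆ S, X↓S' is dense in ℓ²(S)↓S', and a ∈ X satisfies a↓S' ∉ X. Then there is no subspace X'' of X with X'' orthogonal to X↓S' and X = (X↓S') + X''. (Proof idea: writing a = a' + a'' with a' ∈ X↓S' and a'' ∈ X'' forces a''↓S' ≠ 0, and density of X↓S' in ℓ²(S)↓S' yields b ∈ X↓S' with (a'', b) ≠ 0, contradicting orthogonality.) -/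
noncomputable section
open scoped InnerProductSpace ENNReal

/-- A maximal orthonormal system of a subspace `X`. -/
def MaximalOrthIn (k : Type*) {E : Type*} [RCLike k] [NormedAddCommGroup E]
    [InnerProductSpace k E] (X : Submodule k E) (B : Set E) : Prop :=
  B ⊆ X ∧ OrthSet k B ∧ ∀ C : Set E, C ⊆ X → B ⊆ C → OrthSet k C → C = B

/-- An orthonormal basis of the subspace `X`: an orthonormal subset of `X`
whose linear span is dense in `X`. -/
def IsOrthBasisOf (k : Type*) {E : Type*} [RCLike k] [NormedAddCommGroup E]
    [InnerProductSpace k E] (X : Submodule k E) (B : Set E) : Prop :=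
  B ⊆ X ∧ OrthSet k B ∧ (X : Set E) ⊆ closure (Submodule.span k B : Set E)

/-- `X₀` is an orthogonal direct summand of `X`. -/
def IsOrthSummand (k : Type*) {E : Type*} [RCLike k] [NormedAddCommGroup E]
    [InnerProductSpace k E] (X X₀ : Submodule k E) : Prop :=
  ∃ X'' : Submodule k E, X'' ≤ X ∧ (∀ u ∈ X₀, ∀ v ∈ X'', (inner k u v : k) = 0) ∧
    X₀ ⊔ X'' = X

/-- The closed subspace of `ℓ²(S)` of vectors with support contained in `A`. -/
def lpRes (k : Type*) {S : Type*} [RCLike k] (A : Set S) :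
    Submodule k (lp (fun _ : S => k) 2) where
  carrier := {u | ∀ s ∉ A, u s = 0}
  zero_mem' := by intro s _; simp
  add_mem' := by intro a b ha hb s hs; simp [lp.coeFn_add, ha s hs, hb s hs]
  smul_mem' := by intro c a ha s hs; simp [lp.coeFn_smul, ha s hs]

/-- The truncation `u↓A` of `u ∈ ℓ²(S)` to a subset `A ⊆ S`. -/
def lpTrunc {k : Type*} {S : Type*} [RCLike k] (u : lp (fun _ : S => k) 2) (A : Set S) :
    lp (fun _ : S => k) 2 :=
  ⟨A.indicator ⇑u, by
    refine memℓp_gen ?_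
    have hs : Summable fun s => ‖u s‖ ^ (2 : ℝ≥0∞).toReal :=
      (memℓp_gen_iff (by norm_num)).1 (lp.memℓp u)
    refine hs.of_nonneg_of_le (fun s => by positivity) (fun s => ?_)
    by_cases hsA : s ∈ A
    · simp [Set.indicator, hsA]
    · simp only [Set.indicator, hsA, if_false, norm_zero]
      rw [Real.zero_rpow (by norm_num)]
      positivity⟩

/- If `X↓S'` had an orthogonal complement `X''` inside `X`, write `a = a' + a''` with `a' ∈ X↓S'`
and `a'' ∈ X''`. Every vector of `ℓ²(S)↓S'` is a limit of vectors of `X↓S'`, hence orthogonal to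
`a''`; in particular so is `a''↓S'`, and since `⟪a''↓S', a''⟫ = ‖a''↓S'‖²` this forces
`a''↓S' = 0`. But then `a↓S' = a' ∈ X`. -/

section lpTrunc

variable {k : Type*} [RCLike k] {S : Type*}

@[simp]
theorem lpTrunc_apply (u : lp (fun _ : S => k) 2) (A : Set S) (s : S) :
    lpTrunc u A s = A.indicator u s :=
  rfl

theorem lpTrunc_add (u v : lp (fun _ : S => k) 2) (A : Set S) :
    lpTrunc (u + v) A = lpTrunc u A + lpTrunc v A :=
  lp.ext <| funext fun s => by
    by_cases hs : s ∈ A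
    · simp only [lp.coeFn_add, Pi.add_apply, lpTrunc_apply, Set.indicator_of_mem hs]
    · simp only [lp.coeFn_add, Pi.add_apply, lpTrunc_apply, Set.indicator_of_notMem hs, add_zero]

theorem lpTrunc_mem_lpRes (u : lp (fun _ : S => k) 2) (A : Set S) : lpTrunc u A ∈ lpRes k A :=
  fun _ hs => Set.indicator_of_notMem hs _

theorem lpTrunc_eq_self_of_mem_lpRes {u : lp (fun _ : S => k) 2} {A : Set S}
    (hu : u ∈ lpRes k A) : lpTrunc u A = u :=
  lp.ext <| funext fun s => by
    by_cases hs : s ∈ A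
    · simp [hs]
    · simp [hs, hu s hs]

theorem inner_lpTrunc_right_of_mem_lpRes {w : lp (fun _ : S => k) 2} {A : Set S}
    (hw : w ∈ lpRes k A) (v : lp (fun _ : S => k) 2) :
    ⟪w, lpTrunc v A⟫_k = ⟪w, v⟫_k := by
  rw [lp.inner_eq_tsum, lp.inner_eq_tsum]
  congr 1
  funext s
  by_cases hs : s ∈ A
  · simp [hs]
  · simp [hs, hw s hs]

theorem lpTrunc_eq_zero_of_orthogonal {Y : Submodule k (lp (fun _ : S => k) 2)} {A : Set S}
    (hY : (lpRes k A : Set (lp (fun _ : S => k) 2)) ⊆ closure (Y : Set (lp (fun _ : S => k) 2)))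
    {v : lp (fun _ : S => k) 2} (hv : ∀ u ∈ Y, ⟪u, v⟫_k = 0) : lpTrunc v A = 0 := by
  have hYv : (Y : Set (lp (fun _ : S => k) 2)) ⊆ (k ∙ v)ᗮ := fun u hu =>
    (Submodule.mem_orthogonal' _ _).2 fun _ hx => by
      obtain ⟨c, rfl⟩ := Submodule.mem_span_singleton.1 hx
      rw [inner_smul_right, hv u hu, mul_zero]
  have hw : lpTrunc v A ∈ (k ∙ v)ᗮ :=
    closure_minimal hYv (Submodule.isClosed_orthogonal _) (hY (lpTrunc_mem_lpRes v A))
  rw [← inner_self_eq_zero (𝕜 := k), inner_lpTrunc_right_of_mem_lpRes (lpTrunc_mem_lpRes v A)]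
  exact Submodule.inner_left_of_mem_orthogonal (Submodule.mem_span_singleton_self v) hw

end lpTrunc

theorem stmt17_general {k : Type*} [RCLike k] {S : Type*}
    (X : Submodule k (lp (fun _ : S => k) 2))
    (S' : Set S)
    (hdense : (lpRes k S' : Set (lp (fun _ : S => k) 2)) ⊆
      closure ((X ⊓ lpRes k S' : Submodule k (lp (fun _ : S => k) 2)) :
        Set (lp (fun _ : S => k) 2)))
    (a : lp (fun _ : S => k) 2) (ha : a ∈ X) (hta : lpTrunc a S' ∉ X) :
    ¬ ∃ X'' : Submodule k (lp (fun _ : S => k) 2), X'' ≤ X ∧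
        (∀ u ∈ X ⊓ lpRes k S', ∀ v ∈ X'', (inner k u v : k) = 0) ∧
        (X ⊓ lpRes k S') ⊔ X'' = X := by
  rintro ⟨X'', -, horth, hsup⟩
  obtain ⟨a', ha', a'', ha'', rfl⟩ := Submodule.mem_sup.1 (hsup ▸ ha)
  have ha''S' : lpTrunc a'' S' = 0 :=
    lpTrunc_eq_zero_of_orthogonal hdense fun u hu => horth u hu a'' ha''
  apply hta
  rw [lpTrunc_add, ha''S', add_zero, lpTrunc_eq_self_of_mem_lpRes ha'.2]
  exact ha'.1

/-- if `a ∈ X` and `a↓S' ∉ X` then `X↓S'` is not an orthogonal direct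
summand of `X`. -/
theorem stmt17 {k : Type*} [RCLike k] {S : Type*}
    (X : Submodule k (lp (fun _ : S => k) 2))
    (hX : Dense (X : Set (lp (fun _ : S => k) 2)))
    (S' : Set S)
    (hdense : (lpRes k S' : Set (lp (fun _ : S => k) 2)) ⊆
      closure ((X ⊓ lpRes k S' : Submodule k (lp (fun _ : S => k) 2)) :
        Set (lp (fun _ : S => k) 2)))
    (a : lp (fun _ : S => k) 2) (ha : a ∈ X) (hta : lpTrunc a S' ∉ X) :
    ¬ ∃ X'' : Submodule k (lp (fun _ : S => k) 2), X'' ≤ X ∧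
        (∀ u ∈ X ⊓ lpRes k S', ∀ v ∈ X'', (inner k u v : k) = 0) ∧
        (X ⊓ lpRes k S') ⊔ X'' = X :=
  stmt17_general X S' hdense a ha hta
end
end
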